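/- Let Y ∈ {-1,1}^{l×n} and let its columns be partitioned into g blocks Y_1, ..., Y_g of sizes n_1, ..., n_g with n_1 + ... + n_g = n and each n_m ≥ 1. Let S_0 and S_m be the global and local cosine-similarity matrices defined entrywise by [S_0]_{ij} = ⟨y_{i,:}, y_{j,:}⟩/(‖y_{i,:}‖‖y_{j,:}‖) and [S_m]_{ij} = ⟨y_{m,i,:}, y_{m,j,:}⟩/(‖y_{m,i,:}‖‖y_{m,j,:}‖), and let L_0 = Diag(S_0·1) − S_0 and L_m = Diag(S_m·1) − S_m be the corresponding Laplacian matrices. Then L_0 = Σ_{m=1}^{g} (n_m/n) L_m. -/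

import Mathlib

open Matrix BigOperators

/-- The Laplacian of a square matrix `S`: `Diag(S·1) − S`. -/
def laplacian {l : ℕ} (S : Matrix (Fin l) (Fin l) ℝ) : Matrix (Fin l) (Fin l) ℝ :=
  Matrix.diagonal (fun i => ∑ j, S i j) - S

section Laplacian

variable {l : ℕ}

lemma laplacian_add (S T : Matrix (Fin l) (Fin l) ℝ) :
    laplacian (S + T) = laplacian S + laplacian T := by
  have hrow : (fun i => ∑ j, (S + T) i j) = fun i => ∑ j, S i j + ∑ j, T i j :=
    funext fun i => Finset.sum_add_distrib
  rw [laplacian, laplacian, laplacian, hrow, ← diagonal_add]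
  abel

lemma laplacian_smul (c : ℝ) (S : Matrix (Fin l) (Fin l) ℝ) :
    laplacian (c • S) = c • laplacian S := by
  have hrow : (fun i => ∑ j, (c • S) i j) = c • fun i => ∑ j, S i j :=
    funext fun i => (Finset.mul_sum _ _ _).symm
  rw [laplacian, laplacian, hrow, diagonal_smul, smul_sub]

variable (l) in
def laplacianLinearMap : Matrix (Fin l) (Fin l) ℝ →ₗ[ℝ] Matrix (Fin l) (Fin l) ℝ where
  toFun := laplacian
  map_add' := laplacian_add
  map_smul' := laplacian_smul

lemma laplacian_sum_smul {β : Type*} (s : Finset β) (c : β → ℝ)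
    (S : β → Matrix (Fin l) (Fin l) ℝ) :
    laplacian (∑ b ∈ s, c b • S b) = ∑ b ∈ s, c b • laplacian (S b) := by
  simp only [← laplacian_smul]
  exact map_sum (laplacianLinearMap l) _ s

end Laplacian

noncomputable def cosineSim {κ ι : Type*} [Fintype ι] (Y : Matrix κ ι ℝ) : Matrix κ κ ℝ :=
  fun i j => (∑ t, Y i t * Y j t) / (Real.sqrt (∑ t, Y i t ^ 2) * Real.sqrt (∑ t, Y j t ^ 2))

section CosineSim

variable {κ ι : Type*} [Fintype ι]

lemma sum_sq_eq_card_of_sign (v : ι → ℝ) (hv : ∀ t, v t = 1 ∨ v t = -1) :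
    ∑ t, v t ^ 2 = Fintype.card ι := by
  have hsq : ∀ t, v t ^ 2 = 1 := fun t => by rcases hv t with h | h <;> simp [h]
  simp [hsq]

lemma cosineSim_apply_of_sign (Y : Matrix κ ι ℝ) (hY : ∀ i t, Y i t = 1 ∨ Y i t = -1)
    (i j : κ) : cosineSim Y i j = (∑ t, Y i t * Y j t) / Fintype.card ι := by
  rw [cosineSim, sum_sq_eq_card_of_sign _ (hY i), sum_sq_eq_card_of_sign _ (hY j),
    Real.mul_self_sqrt (Nat.cast_nonneg _)]

/-- For sign matrices the norms are fixed by the number of columns, so the inner products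
split over column blocks and the cosine similarity becomes a size-weighted average. -/
lemma cosineSim_sigma_of_sign {β : Type*} [Fintype β] {ι : β → Type*} [∀ b, Fintype (ι b)]
    (Y : Matrix κ (Σ b, ι b) ℝ) (hY : ∀ i t, Y i t = 1 ∨ Y i t = -1) :
    cosineSim Y = ∑ b, ((Fintype.card (ι b) : ℝ) / Fintype.card (Σ b, ι b)) •
      cosineSim (fun i t => Y i ⟨b, t⟩) := by
  ext i j
  simp only [Matrix.sum_apply, Matrix.smul_apply, smul_eq_mul, cosineSim_apply_of_sign Y hY,
    cosineSim_apply_of_sign _ (fun i t => hY i ⟨_, t⟩)]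
  rw [Fintype.sum_sigma, Finset.sum_div]
  refine Finset.sum_congr rfl fun b _ => ?_
  -- an empty block contributes `0` on both sides, its weight multiplying the junk value `0 / 0`
  rcases isEmpty_or_nonempty (ι b) with hb | hb
  · simp
  · have : (Fintype.card (ι b) : ℝ) ≠ 0 := by positivity
    field_simp

end CosineSim

theorem stmt_2_general (l g n : ℕ) (nm : Fin g → ℕ)
    (hn : n = ∑ m, nm m)
    (Y : Matrix (Fin l) ((m : Fin g) × Fin (nm m)) ℝ)
    (hY : ∀ i t, Y i t = 1 ∨ Y i t = -1)
    (S0 : Matrix (Fin l) (Fin l) ℝ)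
    (hS0 : ∀ i j, S0 i j = (∑ t, Y i t * Y j t) /
      (Real.sqrt (∑ t, Y i t ^ 2) * Real.sqrt (∑ t, Y j t ^ 2)))
    (S : Fin g → Matrix (Fin l) (Fin l) ℝ)
    (hS : ∀ m i j, S m i j =
      (∑ t : Fin (nm m), Y i ⟨m, t⟩ * Y j ⟨m, t⟩) /
      (Real.sqrt (∑ t : Fin (nm m), Y i ⟨m, t⟩ ^ 2) *
        Real.sqrt (∑ t : Fin (nm m), Y j ⟨m, t⟩ ^ 2))) :
    laplacian S0 = ∑ m, ((nm m : ℝ) / (n : ℝ)) • laplacian (S m) := by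
  have hS0 : S0 = cosineSim Y := Matrix.ext hS0
  have hS : S = fun m => cosineSim (fun i t => Y i ⟨m, t⟩) := funext fun m => Matrix.ext (hS m)
  have hcard : Fintype.card ((m : Fin g) × Fin (nm m)) = n := by
    simp [Fintype.card_sigma, hn]
  rw [← laplacian_sum_smul, hS0, hS, cosineSim_sigma_of_sign Y hY, hcard]
  simp only [Fintype.card_fin]

/-- The global cosine-similarity Laplacian is the size-weighted combination of the
local cosine-similarity Laplacians. -/
theorem stmt_2 (l g n : ℕ) (nm : Fin g → ℕ) (hnm : ∀ m, 1 ≤ nm m)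
    (hn : n = ∑ m, nm m)
    (Y : Matrix (Fin l) ((m : Fin g) × Fin (nm m)) ℝ)
    (hY : ∀ i t, Y i t = 1 ∨ Y i t = -1)
    (S0 : Matrix (Fin l) (Fin l) ℝ)
    (hS0 : ∀ i j, S0 i j = (∑ t, Y i t * Y j t) /
      (Real.sqrt (∑ t, Y i t ^ 2) * Real.sqrt (∑ t, Y j t ^ 2)))
    (S : Fin g → Matrix (Fin l) (Fin l) ℝ)
    (hS : ∀ m i j, S m i j =
      (∑ t : Fin (nm m), Y i ⟨m, t⟩ * Y j ⟨m, t⟩) /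
      (Real.sqrt (∑ t : Fin (nm m), Y i ⟨m, t⟩ ^ 2) *
        Real.sqrt (∑ t : Fin (nm m), Y j ⟨m, t⟩ ^ 2))) :
    laplacian S0 = ∑ m, ((nm m : ℝ) / (n : ℝ)) • laplacian (S m) :=
  stmt_2_general l g n nm hn Y hY S0 hS0 S hS
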